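/- arXiv:0802.0677 — 3 statements merged into one kernel-verified Lean document; each statement's English description precedes it below -/
import Mathlib

section
/- For the family f_a(x) = sin(a·x), there exists λ > 0 such that for all distinct α, β ∈ ℝ with α/β irrational (β ≠ 0), there exists z ∈ ℝ with |f_α(z) − f_β(z)| > λ. -/
/-!
Put `r = α / β` and `z = k π / β` for an integer `k`: then `sin (β z) = 0` and
`sin (α z) = sin (k r π)`. Since `r` is irrational, the group `ℤ r + ℤ` is dense in `ℝ`, so some
`k r` lies within `1/3` of a half-integer modulo `1`, and then `|sin (k r π)| > 1/2`.
So `1/2` works for every pair.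
-/

open Real Set

lemma one_half_lt_sin_of_mem_Ioo {x : ℝ} (hx : x ∈ Ioo (π / 6) (5 * π / 6)) : 1 / 2 < sin x := by
  have hdist : |x - π / 2| < π / 3 := by
    rw [abs_lt]; constructor <;> linarith [hx.1, hx.2]
  have h := cos_lt_cos_of_nonneg_of_le_pi (abs_nonneg _) (by linarith [pi_pos]) hdist
  rwa [cos_pi_div_three, cos_abs, cos_sub_pi_div_two] at h

lemma Irrational.exists_int_one_half_lt_abs_sin {r : ℝ} (hr : Irrational r) :
    ∃ k : ℤ, 1 / 2 < |sin (k * r * π)| := by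
  have hdense : Dense (AddSubgroup.closure {r, 1} : Set ℝ) :=
    dense_addSubgroupClosure_pair_iff.2 (by rwa [div_one])
  obtain ⟨y, hy_mem, hy⟩ :=
    hdense.exists_mem_open isOpen_Ioo (nonempty_Ioo.2 (by norm_num : (1 / 6 : ℝ) < 5 / 6))
  obtain ⟨k, m, rfl⟩ := AddSubgroup.mem_closure_pair.1 hy_mem
  refine ⟨k, ?_⟩
  have hsin : sin (k * r * π) = (-1) ^ m * sin ((k • r + m • (1 : ℝ)) * π) := by
    rw [← sin_sub_int_mul_pi]; congr 1; simp only [zsmul_eq_mul, mul_one]; ring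
  have hy_pi : (k • r + m • (1 : ℝ)) * π ∈ Ioo (π / 6) (5 * π / 6) := by
    constructor <;> nlinarith [hy.1, hy.2, pi_pos]
  rw [hsin, abs_mul, abs_neg_one_zpow, one_mul]
  exact (one_half_lt_sin_of_mem_Ioo hy_pi).trans_le (le_abs_self _)

theorem stmt2 :
    ∃ l > 0, ∀ α β : ℝ, α ≠ β → β ≠ 0 → Irrational (α / β) →
      ∃ z : ℝ, |Real.sin (α * z) - Real.sin (β * z)| > l := by
  refine ⟨1 / 2, by norm_num, fun α β _ hβ hirr => ?_⟩
  obtain ⟨k, hk⟩ := hirr.exists_int_one_half_lt_abs_sin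
  refine ⟨k * π / β, ?_⟩
  have hα : α * (k * π / β) = k * (α / β) * π := by field_simp
  have hβz : β * (k * π / β) = k * π := by field_simp
  rwa [hα, hβz, sin_int_mul_pi, sub_zero]
end

section
/- If α and β are real numbers such that β − α is an irrational multiple of 2π (i.e. (β − α)/(2π) is irrational), then the set {((α·n) mod 2π, (β·n) mod 2π) : n ∈ ℕ} is not contained in any finite union of points; concretely, the sequence n ↦ sin(α·n) − sin(β·n) takes infinitely many distinct values. -/
/-!
Write `a = exp (α i)` and `b = exp (β i)`, so that the sequence is `Im (aⁿ - bⁿ)`. If it took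
only finitely many values, some window of four consecutive terms would recur `p > 0` steps later.
Then `Im ((aᵖ - 1) aᵐ - (bᵖ - 1) bᵐ) = 0` for four consecutive `m`, a relation between the
powers of at most four distinct numbers `a, ā, b, b̄`; by the invertibility of the Vandermonde
matrix all its coefficients vanish, which forces `a²ᵖ = 1 = b²ᵖ`. Hence `(β - α) · 2p ∈ 2πℤ`,
contradicting irrationality.
-/

open Complex ComplexConjugate Finset

lemma exists_shift_eq_on_window {α : Type*} {f : ℕ → α} (hf : (Set.range f).Finite) (k : ℕ) :
    ∃ n p, 0 < p ∧ ∀ j < k, f (n + j + p) = f (n + j) := by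
  obtain ⟨m, m', hlt, heq⟩ := Set.Finite.exists_lt_map_eq_of_forall_mem
    (t := Set.univ.pi fun _ : Fin k => Set.range f) (f := fun n j => f (n + j))
    (fun n j _ => Set.mem_range_self _) (Set.Finite.pi fun _ => hf)
  refine ⟨m, m' - m, by omega, fun j hj => ?_⟩
  rw [show m + j + (m' - m) = m' + j by omega]
  exact (congrFun heq ⟨j, hj⟩).symm

lemma Finsupp.eq_zero_of_linearCombination_pow_eq_zero {R : Type*} [CommRing R] [IsDomain R]
    {s : Finset R} {k : ℕ} (hs : #s ≤ k) {v : R →₀ R} (hv : v ∈ Finsupp.supported R R ↑s)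
    (h : ∀ j < k, Finsupp.linearCombination R (· ^ j) v = 0) : v = 0 := by
  have hsum : ∀ j : Fin #s,
      ∑ i, v (s.equivFin.symm i) * (s.equivFin.symm i : R) ^ (j : ℕ) = 0 := by
    intro j
    rw [← h j (by omega), Finsupp.linearCombination_apply_of_mem_supported R hv,
      ← s.sum_coe_sort, ← s.equivFin.symm.sum_comp]
    rfl
  have hzero := Matrix.eq_zero_of_forall_pow_sum_mul_pow_eq_zero
    (Subtype.val_injective.comp s.equivFin.symm.injective) hsum
  ext x
  by_cases hx : x ∈ s
  · simpa using congrFun hzero (s.equivFin ⟨x, hx⟩)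
  · exact Finsupp.notMem_support_iff.1 fun h => hx (hv h)

lemma pow_two_mul_eq_one_of_im_shift_eq {a b : ℂ} (ha : ‖a‖ = 1) (hab : a ≠ b) {n p : ℕ}
    (H : ∀ j < 4, (a ^ (n + j + p) - b ^ (n + j + p)).im = (a ^ (n + j) - b ^ (n + j)).im) :
    a ^ (2 * p) = 1 := by
  set c := a ^ p - 1
  set d := b ^ p - 1
  set v : ℂ →₀ ℂ := .single a (c * a ^ n) - .single (conj a) (conj c * conj a ^ n)
    - .single b (d * b ^ n) + .single (conj b) (conj d * conj b ^ n)
  have hv : v = 0 := by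
    refine Finsupp.eq_zero_of_linearCombination_pow_eq_zero (s := {a, conj a, b, conj b})
      card_le_four ?_ fun j hj => ?_
    · refine add_mem (sub_mem (sub_mem ?_ ?_) ?_) ?_ <;>
        exact Finsupp.single_mem_supported ℂ _ (by simp)
    · set z := c * a ^ (n + j) - d * b ^ (n + j)
      have hz : z.im = 0 := by
        have hz' : z = (a ^ (n + j + p) - b ^ (n + j + p)) - (a ^ (n + j) - b ^ (n + j)) := by
          simp only [z, c, d]; ring
        rw [hz', sub_im, H j hj, sub_self]
      calc Finsupp.linearCombination ℂ (· ^ j) v = z - conj z := by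
            simp only [v, z, c, d, map_add, map_sub, Finsupp.linearCombination_single,
              smul_eq_mul, map_mul, map_pow, map_one]
            ring
        _ = 0 := by rw [sub_conj, hz]; simp
  have ha0 : a ≠ 0 := norm_ne_zero_iff.1 (ha ▸ one_ne_zero)
  -- The coefficient of `v` at `a` is `c aⁿ`, plus `conj d · b̄ⁿ = c aⁿ` in case `b̄ = a`.
  have hva : v a = 0 := by rw [hv]; rfl
  by_cases hreal : conj a = a
  · have ha2 : a ^ 2 = 1 := by
      rw [sq]; nth_rewrite 2 [← hreal]; rw [mul_conj', ha]; norm_num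
    rw [pow_mul, ha2, one_pow]
  suffices c = 0 by rw [mul_comm, pow_mul, sub_eq_zero.1 this, one_pow]
  by_cases hba : conj b = a
  · have hdc : conj d = c := by simp [d, c, ← hba]
    simpa [v, hreal, hab, hba, hdc, ha0] using hva
  · simpa [v, hreal, hab, hba, ha0] using hva

lemma exp_ofReal_mul_I_pow (x : ℝ) (m : ℕ) : exp (x * I) ^ m = exp (↑(x * m) * I) := by
  rw [← exp_nat_mul]; push_cast; ring_nf

lemma exp_ofReal_mul_I_pow_ne_of_irrational {α β : ℝ} (h : Irrational ((β - α) / (2 * Real.pi)))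
    {q : ℕ} (hq : 0 < q) : exp (α * I) ^ q ≠ exp (β * I) ^ q := by
  rw [exp_ofReal_mul_I_pow, exp_ofReal_mul_I_pow, Ne, exp_eq_exp_iff_exists_int]
  rintro ⟨m, hm⟩
  have hm' : α * q = β * q + m * (2 * Real.pi) := by
    apply_fun Complex.im at hm; simpa using hm
  refine h ⟨-m / q, ?_⟩
  push_cast
  field_simp
  linarith

theorem stmt3 (α β : ℝ) (h : Irrational ((β - α) / (2 * Real.pi))) :
    (Set.range fun n : ℕ => Real.sin (α * n) - Real.sin (β * n)).Infinite := by
  set a := exp (α * I)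
  set b := exp (β * I)
  have hsin : ∀ m : ℕ, Real.sin (α * m) - Real.sin (β * m) = (a ^ m - b ^ m).im := fun m => by
    rw [sub_im, exp_ofReal_mul_I_pow, exp_ofReal_mul_I_pow, exp_ofReal_mul_I_im,
      exp_ofReal_mul_I_im]
  intro hfin
  obtain ⟨n, p, hp, hper⟩ := exists_shift_eq_on_window hfin 4
  simp only [hsin] at hper
  have hab : a ≠ b := fun e => exp_ofReal_mul_I_pow_ne_of_irrational h one_pos (congrArg (· ^ 1) e)
  have ha := pow_two_mul_eq_one_of_im_shift_eq (norm_exp_ofReal_mul_I α) hab hper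
  have hb := pow_two_mul_eq_one_of_im_shift_eq (norm_exp_ofReal_mul_I β) hab.symm fun j hj => by
    rw [← neg_sub, neg_im, hper j hj, ← neg_im, neg_sub]
  exact exp_ofReal_mul_I_pow_ne_of_irrational h (by omega) (ha.trans hb.symm)
end

section
/- For the doubling map f : [0,1) → [0,1), f(x) = 2x mod 1, for every x ∈ [0,1), every nonempty open set V ⊆ [0,1), there exists y ∈ V such that liminf_{n→∞} |f^n(x) − f^n(y)| = 0. -/
/-! The translates `x + k / 2 ^ N` (`k : ℤ`) of `x` are dense, so every open set meeting `[0, 1)`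
contains such a `y` in `[0, 1)`. Since the `n`-th iterate is `x ↦ Int.fract (2 ^ n * x)`, the
orbits of `x` and `y` coincide from step `N` on, so the distance is eventually `0`. -/

open Filter Topology

noncomputable def doubling : ℝ → ℝ := fun x => Int.fract (2 * x)

lemma doubling_fract (x : ℝ) : doubling (Int.fract x) = doubling x := by
  have h : 2 * Int.fract x = 2 * x - ((2 * ⌊x⌋ : ℤ) : ℝ) := by
    rw [Int.fract]; push_cast; ring
  rw [doubling, h, Int.fract_sub_intCast, doubling]

lemma doubling_iterate_succ (n : ℕ) (x : ℝ) :
    doubling^[n + 1] x = Int.fract (2 ^ (n + 1) * x) := by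
  induction n with
  | zero => simp [doubling]
  | succ n ih =>
    rw [Function.iterate_succ_apply', ih, doubling_fract, doubling, ← mul_assoc, ← pow_succ']

lemma fract_two_pow_mul_add_dyadic {N n : ℕ} (hNn : N ≤ n) (x : ℝ) (k : ℤ) :
    Int.fract (2 ^ n * (x + k / 2 ^ N)) = Int.fract (2 ^ n * x) := by
  obtain ⟨m, rfl⟩ := Nat.exists_eq_add_of_le hNn
  have h : (2 : ℝ) ^ (N + m) * (x + k / 2 ^ N) = 2 ^ (N + m) * x + ((2 ^ m * k : ℤ) : ℝ) := by
    push_cast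
    rw [pow_add]
    field_simp
  rw [h, Int.fract_add_intCast]

lemma doubling_iterate_add_dyadic_eventually_eq (x : ℝ) (N : ℕ) (k : ℤ) :
    (fun n => doubling^[n] (x + k / 2 ^ N)) =ᶠ[atTop] fun n => doubling^[n] x := by
  filter_upwards [eventually_gt_atTop N] with n hn
  obtain ⟨n, rfl⟩ := Nat.exists_eq_succ_of_ne_zero (by omega : n ≠ 0)
  rw [doubling_iterate_succ, doubling_iterate_succ, fract_two_pow_mul_add_dyadic (by omega)]

lemma exists_add_dyadic_mem_Ico (x : ℝ) {a b : ℝ} (hab : a < b) :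
    ∃ (N : ℕ) (k : ℤ), x + k / 2 ^ N ∈ Set.Ico a b := by
  obtain ⟨N, hN⟩ := exists_pow_lt_of_lt_one (sub_pos.mpr hab) (by norm_num : (1 : ℝ) / 2 < 1)
  have h2N : (0 : ℝ) < 2 ^ N := by positivity
  set k := ⌈2 ^ N * (a - x)⌉
  have hk_ge : 2 ^ N * (a - x) ≤ k := Int.le_ceil _
  have hk_lt : (k : ℝ) < 2 ^ N * (a - x) + 1 := Int.ceil_lt_add_one _
  have hstep : (1 : ℝ) / 2 ^ N < b - a := by rwa [← one_div_pow]
  refine ⟨N, k, ?_, ?_⟩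
  · have : a - x ≤ k / 2 ^ N := by rw [le_div_iff₀ h2N]; linarith
    linarith
  · have : (k : ℝ) / 2 ^ N < a - x + 1 / 2 ^ N := by
      rw [div_lt_iff₀ h2N, add_mul, one_div_mul_cancel h2N.ne']
      linarith
    linarith

theorem stmt9_general (x : ℝ)
    (V : Set ℝ) (hVopen : IsOpen V) (hV : (V ∩ Set.Ico (0:ℝ) 1).Nonempty) :
    ∃ y ∈ V ∩ Set.Ico (0:ℝ) 1,
      Filter.liminf (fun n : ℕ => |doubling^[n] x - doubling^[n] y|) atTop = 0 := by
  obtain ⟨z, hzV, hz⟩ := hV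
  have hmem : V ∩ Set.Ico 0 1 ∈ 𝓝[≥] z :=
    inter_mem (mem_nhdsWithin_of_mem_nhds (hVopen.mem_nhds hzV)) (Ico_mem_nhdsGE_of_mem hz)
  obtain ⟨u, hzu, hsub⟩ := mem_nhdsGE_iff_exists_Ico_subset.mp hmem
  obtain ⟨N, k, hy⟩ := exists_add_dyadic_mem_Ico x hzu
  refine ⟨x + k / 2 ^ N, hsub hy, ?_⟩
  have hdist : (fun n => |doubling^[n] x - doubling^[n] (x + k / 2 ^ N)|) =ᶠ[atTop] fun _ => 0 :=
    (doubling_iterate_add_dyadic_eventually_eq x N k).mono fun n hn => by simp [hn]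
  rw [liminf_congr hdist, liminf_const]

theorem stmt9 (x : ℝ) (hx : x ∈ Set.Ico (0:ℝ) 1)
    (V : Set ℝ) (hVopen : IsOpen V) (hV : (V ∩ Set.Ico (0:ℝ) 1).Nonempty) :
    ∃ y ∈ V ∩ Set.Ico (0:ℝ) 1,
      Filter.liminf (fun n : ℕ => |doubling^[n] x - doubling^[n] y|) atTop = 0 :=
  stmt9_general x V hVopen hV
end
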